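/- Let n = 2k+1 be odd with n ≥ 3, let A be the Cartan matrix of type A_n, and let σ be any permutation of {1,…,n}. Then the kernel of B_σ over ℚ is spanned by a single nonzero vector v whose support {i : v_i ≠ 0} is exactly the set of odd indices {1, 3, …, n}; in particular the support of v has exactly k+1 connected components in the Dynkin diagram of type A_n (a path on {1,…,n}). -/

import Mathlib

/-! `B_σ` is skew-symmetric of odd size, hence singular, and its nonzero entries are exactly
the edges of the path. So in `B w = 0`, row `0` forces `w₁ = 0` and row `i` ties `w_{i-1}` to
`w_{i+1}` with nonzero coefficients: every odd coordinate vanishes and every even one vanishes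
iff `w₀` does. A kernel vector is thus determined by `w₀`, the kernel is a line, and its
generator is supported on the even nodes, an independent set of `k + 1` vertices of the path. -/

open Matrix

/-- The Cartan matrix of type `Aₙ` (nodes indexed `0, …, n-1`). -/
def cartanA (n : ℕ) : Matrix (Fin n) (Fin n) ℚ :=
  fun i j => if i = j then 2
    else if i.val + 1 = j.val ∨ j.val + 1 = i.val then -1 else 0

/-- The acyclic exchange matrix `B_σ` attached to a Cartan matrix `A` and a permutation `σ`:
`b i i = 0`, `b i j = -a i j` if `σ i < σ j`, and `b i j = a i j` if `σ i > σ j`. -/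
def Bmat {n : ℕ} (A : Matrix (Fin n) (Fin n) ℚ) (σ : Equiv.Perm (Fin n)) :
    Matrix (Fin n) (Fin n) ℚ :=
  fun i j => if i = j then 0 else if σ i < σ j then -A i j else A i j

namespace Matrix

variable {K : Type*} [Field K] {n : ℕ}

def HasPathSupport (B : Matrix (Fin n) (Fin n) K) : Prop :=
  ∀ i j, B i j ≠ 0 ↔ (SimpleGraph.pathGraph n).Adj i j

namespace HasPathSupport

variable {B : Matrix (Fin n) (Fin n) K} (hB : B.HasPathSupport)
include hB

theorem apply_eq_zero_of_not_adj {i j : Fin n} (h : ¬(SimpleGraph.pathGraph n).Adj i j) :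
    B i j = 0 :=
  not_not.mp (mt (hB i j).mp h)

theorem apply_succ_ne_zero (m : ℕ) (h : m + 1 < n) :
    B ⟨m, by omega⟩ ⟨m + 1, h⟩ ≠ 0 :=
  (hB _ _).mpr (by simp [SimpleGraph.pathGraph_adj])

theorem apply_pred_ne_zero (m : ℕ) (h : m + 1 < n) :
    B ⟨m + 1, h⟩ ⟨m, by omega⟩ ≠ 0 :=
  (hB _ _).mpr (by simp [SimpleGraph.pathGraph_adj])

theorem mulVec_apply_zero (w : Fin n → K) (h : 1 < n) :
    (B *ᵥ w) ⟨0, by omega⟩ = B ⟨0, by omega⟩ ⟨1, h⟩ * w ⟨1, h⟩ := by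
  simp only [mulVec, dotProduct]
  refine Fintype.sum_eq_single _ fun j hj => ?_
  rw [hB.apply_eq_zero_of_not_adj, zero_mul]
  simp only [SimpleGraph.pathGraph_adj, ne_eq, Fin.ext_iff] at hj ⊢
  omega

theorem mulVec_apply_succ (w : Fin n → K) (m : ℕ) (h : m + 2 < n) :
    (B *ᵥ w) ⟨m + 1, by omega⟩ =
      B ⟨m + 1, by omega⟩ ⟨m, by omega⟩ * w ⟨m, by omega⟩ +
        B ⟨m + 1, by omega⟩ ⟨m + 2, h⟩ * w ⟨m + 2, h⟩ := by
  simp only [mulVec, dotProduct]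
  refine Fintype.sum_eq_add _ _ (by simp [Fin.ext_iff]) fun j hj => ?_
  rw [hB.apply_eq_zero_of_not_adj, zero_mul]
  simp only [SimpleGraph.pathGraph_adj, ne_eq, Fin.ext_iff] at hj ⊢
  omega

variable {w : Fin n → K} (hw : B *ᵥ w = 0)
include hw

theorem apply_one_eq_zero_of_mulVec_eq_zero (h : 1 < n) : w ⟨1, h⟩ = 0 := by
  have hrow := hB.mulVec_apply_zero w h
  rw [hw, Pi.zero_apply, eq_comm, mul_eq_zero] at hrow
  exact hrow.resolve_left (hB.apply_succ_ne_zero 0 h)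

theorem apply_add_two_eq_zero_iff_of_mulVec_eq_zero (m : ℕ) (h : m + 2 < n) :
    w ⟨m + 2, h⟩ = 0 ↔ w ⟨m, by omega⟩ = 0 := by
  have hrow := hB.mulVec_apply_succ w m h
  have hl := hB.apply_pred_ne_zero m (by omega)
  have hr := hB.apply_succ_ne_zero (m + 1) h
  rw [hw, Pi.zero_apply, eq_comm] at hrow
  constructor
  · intro h0
    simpa [h0, hl] using hrow
  · intro h0
    simpa [h0, hr] using hrow

theorem apply_eq_zero_iff_of_mulVec_eq_zero (hn : 0 < n) (i : Fin n) :
    w i = 0 ↔ i.val % 2 = 1 ∨ w ⟨0, hn⟩ = 0 := by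
  obtain ⟨m, hm⟩ := i
  induction m using Nat.twoStepInduction with
  | zero => simp
  | one => simp [hB.apply_one_eq_zero_of_mulVec_eq_zero hw hm]
  | more m ih _ =>
    rw [hB.apply_add_two_eq_zero_iff_of_mulVec_eq_zero hw m hm, ih (by omega),
      Nat.add_mod_right]

theorem ker_toLin'_le_span_singleton (hn : 0 < n) (hw0 : w ⟨0, hn⟩ ≠ 0) :
    LinearMap.ker (toLin' B) ≤ Submodule.span K {w} := by
  intro u hu
  rw [LinearMap.mem_ker, toLin'_apply] at hu
  have hdiff : B *ᵥ (u - (u ⟨0, hn⟩ / w ⟨0, hn⟩) • w) = 0 := by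
    rw [mulVec_sub, mulVec_smul, hu, hw, smul_zero, sub_zero]
  have hzero : u - (u ⟨0, hn⟩ / w ⟨0, hn⟩) • w = 0 := by
    funext i
    refine (hB.apply_eq_zero_iff_of_mulVec_eq_zero hdiff hn i).mpr (Or.inr ?_)
    simp [hw0]
  exact Submodule.mem_span_singleton.mpr ⟨_, (sub_eq_zero.mp hzero).symm⟩

end HasPathSupport

theorem det_eq_zero_of_transpose_eq_neg {R ι : Type*} [CommRing R] [IsDomain R] [CharZero R]
    [Fintype ι] [DecidableEq ι] {B : Matrix ι ι R} (hι : Odd (Fintype.card ι))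
    (h : Bᵀ = -B) : B.det = 0 := by
  have hdet : (-B).det = B.det := h ▸ det_transpose B
  rw [det_neg, hι.neg_one_pow, neg_one_mul] at hdet
  exact CharZero.neg_eq_self_iff.mp hdet

theorem HasPathSupport.exists_ker_toLin'_eq_span_singleton [CharZero K]
    {B : Matrix (Fin n) (Fin n) K} (hB : B.HasPathSupport) (hn : Odd n) (hskew : Bᵀ = -B) :
    ∃ v : Fin n → K, v ≠ 0 ∧ LinearMap.ker (toLin' B) = Submodule.span K {v} ∧
      {i | v i ≠ 0} = {i : Fin n | i.val % 2 = 0} := by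
  obtain ⟨v, hv, hBv⟩ := exists_mulVec_eq_zero_iff.mpr
    (det_eq_zero_of_transpose_eq_neg (by rwa [Fintype.card_fin]) hskew)
  have hv0 : v ⟨0, hn.pos⟩ ≠ 0 := fun h =>
    hv (funext fun i => (hB.apply_eq_zero_iff_of_mulVec_eq_zero hBv hn.pos i).mpr (Or.inr h))
  refine ⟨v, hv, le_antisymm (hB.ker_toLin'_le_span_singleton hBv hn.pos hv0) ?_, ?_⟩
  · rw [Submodule.span_singleton_le_iff_mem, LinearMap.mem_ker, toLin'_apply, hBv]
  · ext i
    simp only [Set.mem_ofPred_eq, ne_eq, hB.apply_eq_zero_iff_of_mulVec_eq_zero hBv hn.pos i,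
      hv0, or_false]
    omega

end Matrix

theorem cartanA_transpose (n : ℕ) : (cartanA n)ᵀ = cartanA n := by
  ext i j
  simp only [transpose_apply, cartanA, eq_comm (a := j), or_comm]

theorem Bmat_transpose {n : ℕ} {A : Matrix (Fin n) (Fin n) ℚ} (hA : Aᵀ = A)
    (σ : Equiv.Perm (Fin n)) : (Bmat A σ)ᵀ = -Bmat A σ := by
  ext i j
  have hAji : A j i = A i j := by rw [← transpose_apply A i j, hA]
  change Bmat A σ j i = -Bmat A σ i j
  simp only [Bmat, hAji]
  rcases eq_or_ne i j with rfl | hij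
  · simp
  · rcases lt_or_gt_of_ne (σ.injective.ne hij) with h | h <;> simp [hij, hij.symm, h, h.not_gt]

theorem Bmat_ne_zero_iff {n : ℕ} (A : Matrix (Fin n) (Fin n) ℚ) (σ : Equiv.Perm (Fin n))
    (i j : Fin n) : Bmat A σ i j ≠ 0 ↔ i ≠ j ∧ A i j ≠ 0 := by
  unfold Bmat
  split_ifs <;> simp_all

theorem hasPathSupport_Bmat_cartanA {n : ℕ} (σ : Equiv.Perm (Fin n)) :
    (Bmat (cartanA n) σ).HasPathSupport := by
  intro i j
  rw [Bmat_ne_zero_iff, SimpleGraph.pathGraph_adj]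
  simp only [cartanA, ne_eq, Fin.ext_iff]
  split_ifs <;> simp_all

namespace SimpleGraph

theorem card_connectedComponent_induce_of_isIndepSet {V : Type*}
    {G : SimpleGraph V} {s : Set V} (hs : G.IsIndepSet s) :
    Nat.card (G.induce s).ConnectedComponent = Nat.card s := by
  have hbot : G.induce s = ⊥ := by
    ext u v
    simpa using fun huv => hs u.2 v.2 huv.ne huv
  refine (Nat.card_eq_of_bijective _ ⟨fun u v huv => ?_, Quot.mk_surjective⟩).symm
  exact reachable_bot.mp (hbot ▸ ConnectedComponent.eq.mp huv)

theorem isIndepSet_pathGraph_even (n : ℕ) :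
    (pathGraph n).IsIndepSet {i : Fin n | i.val % 2 = 0} := by
  intro i hi j hj _ hij
  simp only [Set.mem_ofPred_eq, pathGraph_adj] at hi hj hij
  omega

end SimpleGraph

theorem card_even_fin_two_mul_add_one (k : ℕ) :
    Nat.card {i : Fin (2 * k + 1) | i.val % 2 = 0} = k + 1 := by
  have hrange :
      Set.range (fun j : Fin (k + 1) => (⟨2 * (j : ℕ), by omega⟩ : Fin (2 * k + 1))) =
        {i | i.val % 2 = 0} := by
    ext i
    refine ⟨?_, fun (hi : i.val % 2 = 0) => ⟨⟨(i : ℕ) / 2, by omega⟩, Fin.ext ?_⟩⟩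
    · rintro ⟨j, rfl⟩
      simp
    · dsimp only
      omega
  rw [← hrange, Nat.card_range_of_injective (fun a b h => by simpa [Fin.ext_iff] using h),
    Nat.card_eq_fintype_card, Fintype.card_fin]

/-- Nodes are `0`-indexed: the even indices are the odd nodes `1, 3, …, n` of the paper. -/
theorem kernel_gen_support_typeA_general (k : ℕ) (σ : Equiv.Perm (Fin (2 * k + 1))) :
    ∃ v : Fin (2 * k + 1) → ℚ, v ≠ 0 ∧
      LinearMap.ker (Matrix.toLin' (Bmat (cartanA (2 * k + 1)) σ)) =
        Submodule.span ℚ {v} ∧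
      {i : Fin (2 * k + 1) | v i ≠ 0} = {i : Fin (2 * k + 1) | i.val % 2 = 0} ∧
      Nat.card
        ((SimpleGraph.pathGraph (2 * k + 1)).induce
          {i : Fin (2 * k + 1) | v i ≠ 0}).ConnectedComponent = k + 1 := by
  obtain ⟨v, hv, hker, hsupp⟩ :=
    (hasPathSupport_Bmat_cartanA σ).exists_ker_toLin'_eq_span_singleton
      (odd_two_mul_add_one k) (Bmat_transpose (cartanA_transpose _) σ)
  refine ⟨v, hv, hker, hsupp, ?_⟩
  rw [hsupp, SimpleGraph.card_connectedComponent_induce_of_isIndepSet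
    (SimpleGraph.isIndepSet_pathGraph_even _), card_even_fin_two_mul_add_one]

/-- In type `Aₙ` with `n = 2k+1` odd, `n ≥ 3`, the kernel of any acyclic exchange matrix
`B_σ` is spanned by a single nonzero vector whose support is exactly the set of nodes with
even `0`-indexed index (i.e. the odd nodes `1, 3, …, n` in `1`-indexed notation); in
particular the support has exactly `k+1` connected components in the Dynkin diagram of
type `Aₙ` (the path graph on the `n` nodes). -/
theorem kernel_gen_support_typeA (k : ℕ) (hk : 1 ≤ k) (σ : Equiv.Perm (Fin (2 * k + 1))) :
    ∃ v : Fin (2 * k + 1) → ℚ, v ≠ 0 ∧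
      LinearMap.ker (Matrix.toLin' (Bmat (cartanA (2 * k + 1)) σ)) =
        Submodule.span ℚ {v} ∧
      {i : Fin (2 * k + 1) | v i ≠ 0} = {i : Fin (2 * k + 1) | i.val % 2 = 0} ∧
      Nat.card
        ((SimpleGraph.pathGraph (2 * k + 1)).induce
          {i : Fin (2 * k + 1) | v i ≠ 0}).ConnectedComponent = k + 1 :=
  kernel_gen_support_typeA_general k σ
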